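/- In a satisfiable 2-CNF, if C is a source-like SCC of the implication digraph, then any satisfying assignment of the 2-CNF obtained by deleting the variables of C and ¬C extends to a satisfying assignment of the original formula by setting all literals of C to False (equivalently, all literals of ¬C to True). -/

import Mathlib

abbrev Lit (n : ℕ) := Fin n × Bool

def negLit {n : ℕ} (x : Lit n) : Lit n := (x.1, !x.2)

def ClauseOK {n : ℕ} (c : Sym2 (Lit n)) : Prop := ¬ (c.map Prod.fst).IsDiag

def impArc {n : ℕ} (F : Finset (Sym2 (Lit n))) (u v : Lit n) : Prop :=
  s(negLit u, v) ∈ F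

def Satisfies {n : ℕ} (a : Fin n → Bool) (F : Finset (Sym2 (Lit n))) : Prop :=
  ∀ c ∈ F, ∃ x ∈ c, a x.1 = x.2

def Reach {n : ℕ} (E : Lit n → Lit n → Prop) : Lit n → Lit n → Prop :=
  Relation.ReflTransGen E

def IsSCC {n : ℕ} (E : Lit n → Lit n → Prop) (C : Set (Lit n)) : Prop :=
  C.Nonempty ∧ (∀ x ∈ C, ∀ y ∈ C, Reach E x y) ∧
    ∀ D : Set (Lit n), C ⊆ D → (∀ x ∈ D, ∀ y ∈ D, Reach E x y) → D = C

def SourceLike {n : ℕ} (E : Lit n → Lit n → Prop) (C : Set (Lit n)) : Prop :=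
  ∀ u ∉ C, ∀ v ∈ C, ¬ E u v

/-! A clause `k ∨ l` of `F` touching `C` has a literal `x` with `x ∈ C` or `¬x ∈ C`. If `¬x ∈ C`
then `x` is set to True. If `x ∈ C`, the clause gives the arc `¬l → x` into `C`; as `C` is
source-like, `¬l ∈ C`, so `l` is set to True. Clauses not touching `C` keep their values from `a`. -/

@[simp]
theorem negLit_negLit {n : ℕ} (x : Lit n) : negLit (negLit x) = x := by
  simp [negLit]

theorem mk_var_eq_or_eq_negLit {n : ℕ} (x : Lit n) (b : Bool) :
    ((x.1, b) : Lit n) = x ∨ ((x.1, b) : Lit n) = negLit x := by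
  obtain ⟨i, c⟩ := x
  cases b <;> cases c <;> simp [negLit]

theorem impArc_negLit_of_mem {n : ℕ} {F : Finset (Sym2 (Lit n))} {k l : Lit n}
    (h : s(k, l) ∈ F) : impArc F (negLit k) l := by
  simpa [impArc] using h

theorem SourceLike.mem_of_arc {n : ℕ} {E : Lit n → Lit n → Prop} {C : Set (Lit n)}
    (hsrc : SourceLike E C) {u v : Lit n} (huv : E u v) (hv : v ∈ C) : u ∈ C := by
  by_contra hu
  exact hsrc u hu v hv huv

section Extension

variable {n : ℕ} {C : Set (Lit n)} {a' : Fin n → Bool}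

theorem apply_eq_of_negLit_mem (hfalse : ∀ x ∈ C, a' x.1 = !x.2) {x : Lit n}
    (hx : negLit x ∈ C) : a' x.1 = x.2 := by
  simpa [negLit] using hfalse _ hx

theorem exists_true_lit_of_var_mem {F : Finset (Sym2 (Lit n))}
    (hsrc : SourceLike (impArc F) C) (hfalse : ∀ x ∈ C, a' x.1 = !x.2)
    {c : Sym2 (Lit n)} (hc : c ∈ F) {x : Lit n} (hxc : x ∈ c) {b : Bool}
    (hb : ((x.1, b) : Lit n) ∈ C) : ∃ y ∈ c, a' y.1 = y.2 := by
  obtain ⟨l, rfl⟩ := Sym2.mem_iff_exists.mp hxc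
  rcases mk_var_eq_or_eq_negLit x b with hxb | hxb <;> rw [hxb] at hb
  · have hl : negLit l ∈ C :=
      hsrc.mem_of_arc (impArc_negLit_of_mem (Sym2.eq_swap ▸ hc)) hb
    exact ⟨l, Sym2.mem_mk_right x l, apply_eq_of_negLit_mem hfalse hl⟩
  · exact ⟨x, Sym2.mem_mk_left x l, apply_eq_of_negLit_mem hfalse hb⟩

end Extension

theorem stmt6_general {n : ℕ} (F : Finset (Sym2 (Lit n)))
    (C : Set (Lit n)) (hsrc : SourceLike (impArc F) C)
    (a : Fin n → Bool)
    (ha : ∀ c ∈ F, (∀ x ∈ c, ∀ b : Bool, ((x.1, b) : Lit n) ∉ C) → ∃ x ∈ c, a x.1 = x.2)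
    (a' : Fin n → Bool)
    (hfalse : ∀ x ∈ C, a' x.1 = !x.2)
    (hagree : ∀ i : Fin n, (∀ b : Bool, ((i, b) : Lit n) ∉ C) → a' i = a i) :
    Satisfies a' F := by
  intro c hc
  by_cases hfree : ∀ x ∈ c, ∀ b : Bool, ((x.1, b) : Lit n) ∉ C
  · obtain ⟨x, hxc, hax⟩ := ha c hc hfree
    exact ⟨x, hxc, (hagree x.1 (hfree x hxc)).trans hax⟩
  · push Not at hfree
    obtain ⟨x, hxc, b, hb⟩ := hfree
    exact exists_true_lit_of_var_mem hsrc hfalse hc hxc hb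

/-- In a satisfiable 2-CNF `F`, let `C` be a source-like SCC of its implication digraph.
If `a` satisfies the formula obtained from `F` by deleting the variables of `C` and `¬C`
(i.e. `a` satisfies every clause of `F` omitting no variable of `C`), then the assignment
`a'` obtained from `a` by setting all literals of `C` to False (equivalently, all literals
of `¬C` to True) and keeping `a` on the remaining variables satisfies `F`. -/
theorem stmt6 {n : ℕ} (F : Finset (Sym2 (Lit n))) (hF : ∀ c ∈ F, ClauseOK c)
    (hsat : ∃ a : Fin n → Bool, Satisfies a F)
    (C : Set (Lit n)) (hC : IsSCC (impArc F) C) (hsrc : SourceLike (impArc F) C)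
    (a : Fin n → Bool)
    (ha : ∀ c ∈ F, (∀ x ∈ c, ∀ b : Bool, ((x.1, b) : Lit n) ∉ C) → ∃ x ∈ c, a x.1 = x.2)
    (a' : Fin n → Bool)
    (hfalse : ∀ x ∈ C, a' x.1 = !x.2)
    (hagree : ∀ i : Fin n, (∀ b : Bool, ((i, b) : Lit n) ∉ C) → a' i = a i) :
    Satisfies a' F :=
  stmt6_general F C hsrc a ha a' hfalse hagree
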